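/- Let A be a finite algebra. Then for each variety U with U ⊂ Var(A) there exists a variety W with U ⊆ W ≺ Var(A); that is, every proper subvariety of Var(A) is contained in a subcover of Var(A). -/

import Mathlib

open FirstOrder FirstOrder.Language

universe u v

/-- A bundled algebra for the language `L`: a type together with an
interpretation of the operation symbols of `L`. -/
structure Alg (L : FirstOrder.Language.{u, v}) : Type (max u v 1) where
  carrier : Type
  [str : L.Structure carrier]

attribute [instance] Alg.str

/-- An identity (equational law): a pair of terms in `n` variables. -/
abbrev Identity (L : FirstOrder.Language) :=
  Σ n : ℕ, L.Term (Fin n) × L.Term (Fin n)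

/-- `A` satisfies the identity `e`: the two induced term functions agree. -/
def Alg.Sat {L : FirstOrder.Language} (A : Alg L) (e : Identity L) : Prop :=
  ∀ v : Fin e.1 → A.carrier, e.2.1.realize v = e.2.2.realize v

/-- The class of all models of a set of identities. -/
def ModClass (L : FirstOrder.Language) (E : Set (Identity L)) : Set (Alg L) :=
  {A | ∀ e ∈ E, A.Sat e}

/-- A variety (equational class): a class of algebras defined by a set of identities. -/
def IsVariety (L : FirstOrder.Language) (V : Set (Alg L)) : Prop :=
  ∃ E : Set (Identity L), V = ModClass L E

/-- `varGen L K` is the smallest variety containing the class `K`: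
the models of all identities valid in `K`. -/
def varGen (L : FirstOrder.Language) (K : Set (Alg L)) : Set (Alg L) :=
  ModClass L {e | ∀ B ∈ K, B.Sat e}

/-- `f` is a `k`-edge operation (`k ≥ 2`): a `(k+1)`-ary operation with
`f(y,y,x,…,x) = f(y,x,y,x,…,x) = x` and `f(x,…,x,y,x,…,x) = x` whenever the
single `y` is in a position `≥ 4` (1-indexed). -/
def IsEdgeOp {A : Type} (k : ℕ) (f : (Fin (k + 1) → A) → A) : Prop :=
  (∀ x y : A, f (fun i => if (i : ℕ) ≤ 1 then y else x) = x) ∧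
  (∀ x y : A, f (fun i => if (i : ℕ) = 0 ∨ (i : ℕ) = 2 then y else x) = x) ∧
  (∀ i : Fin (k + 1), 3 ≤ (i : ℕ) → ∀ x y : A,
    f (Function.update (fun _ => x) i y) = x)

/-- An algebra has an edge term if some term induces a `k`-edge operation for some `k ≥ 2`. -/
def HasEdgeTerm (L : FirstOrder.Language) (A : Type) [L.Structure A] : Prop :=
  ∃ k : ℕ, 2 ≤ k ∧ ∃ t : L.Term (Fin (k + 1)), IsEdgeOp k (fun v : Fin (k + 1) → A => t.realize v)

/-- An algebra is `k`-generated if it is generated by a subset of size at most `k`. -/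
def KGen (L : FirstOrder.Language) (k : ℕ) (A : Alg L) : Prop :=
  ∃ S : Set A.carrier, S.Finite ∧ S.ncard ≤ k ∧ Substructure.closure L S = ⊤

/-- An algebra is finitely generated if it is generated by a finite subset. -/
def FinGen (L : FirstOrder.Language) (A : Alg L) : Prop :=
  ∃ S : Set A.carrier, S.Finite ∧ Substructure.closure L S = ⊤

/-- A class of algebras is locally finite if all of its finitely generated members
are finite. -/
def IsLocallyFinite (L : FirstOrder.Language) (V : Set (Alg L)) : Prop :=
  ∀ A ∈ V, FinGen L A → Finite A.carrier

/-- A finite algebra `B` is cardinality critical if it does not lie in the variety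
generated by the algebras in `Var(B)` of size smaller than `B`. -/
def CardCritical (L : FirstOrder.Language) (B : Alg L) : Prop :=
  Finite B.carrier ∧
    B ∉ varGen L {C | C ∈ varGen L {B} ∧ Cardinal.mk C.carrier < Cardinal.mk B.carrier}

/-- `V` is a subcover of `W`: `V ⊂ W` and no variety lies strictly between them. -/
def IsSubcover (L : FirstOrder.Language) (V W : Set (Alg L)) : Prop :=
  V ⊂ W ∧ ¬ ∃ V' : Set (Alg L), IsVariety L V' ∧ V ⊂ V' ∧ V' ⊂ W

/-! A proper subvariety of `Var(A)` is exactly a subvariety omitting `A`, so by Zorn's lemma it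
suffices that the union of a chain of subvarieties omitting `A` generates a variety omitting `A`.
Each such subvariety has an identity failing in `A`, and (collapsing variables along a
valuation) one in `|A|` variables. Inside `Var(A)` an identity in `|A|` variables holds or fails
according to the pair of term operations it induces on `A`, and there are only finitely many
such pairs; so along the chain the sets of pairs coming from identities failing in `A` stabilise,
and one pair serves the whole chain. -/

theorem IsChain.exists_forall_subset_of_antitone {α β : Type*} [Preorder α] {c : Set α}
    (hc : IsChain (· ≤ ·) c) (hne : c.Nonempty) {f : α → Set β} (hf : Antitone f)
    (hfin : ∀ a ∈ c, (f a).Finite) : ∃ a₀ ∈ c, ∀ a ∈ c, f a₀ ⊆ f a := by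
  obtain ⟨a₀, ha₀, hmin⟩ :=
    exists_minimalFor_of_wellFoundedLT (· ∈ c) (fun a => (f a).ncard) hne
  refine ⟨a₀, ha₀, fun a ha => ?_⟩
  rcases hc.total ha₀ ha with h | h
  · have hsub : f a ⊆ f a₀ := hf h
    have hcard := hmin ha (Set.ncard_le_ncard hsub (hfin a₀ ha₀))
    exact (Set.eq_of_subset_of_ncard_le hsub hcard (hfin a₀ ha₀)).ge
  · exact hf h

section Varieties

variable {L : FirstOrder.Language}

theorem isVariety_varGen (K : Set (Alg L)) : IsVariety L (varGen L K) :=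
  ⟨_, rfl⟩

theorem subset_varGen (K : Set (Alg L)) : K ⊆ varGen L K :=
  fun _ hB _ he => he _ hB

theorem varGen_subset_of_isVariety {K V : Set (Alg L)} (hV : IsVariety L V) (hK : K ⊆ V) :
    varGen L K ⊆ V := by
  obtain ⟨E, rfl⟩ := hV
  exact fun _ hB e he => hB e fun _ hC => hK hC e he

theorem sat_of_mem_varGen_singleton {A B : Alg L} (hB : B ∈ varGen L {A}) {e : Identity L}
    (he : A.Sat e) : B.Sat e :=
  hB e fun _ hC => hC ▸ he

theorem ssubset_varGen_singleton_iff {A : Alg L} {V : Set (Alg L)} (hV : IsVariety L V) :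
    V ⊂ varGen L {A} ↔ V ⊆ varGen L {A} ∧ A ∉ V :=
  ⟨fun h => ⟨h.subset, fun hA => h.ne (h.subset.antisymm
      (varGen_subset_of_isVariety hV (Set.singleton_subset_iff.mpr hA)))⟩,
    fun h => ⟨h.1, fun h' => h.2 (h' (subset_varGen _ rfl))⟩⟩

theorem exists_identity_fin_card_of_not_sat (A : Alg L) [Finite A.carrier] {e : Identity L}
    (he : ¬ A.Sat e) :
    ∃ s t : L.Term (Fin (Nat.card A.carrier)),
      ¬ A.Sat ⟨_, (s, t)⟩ ∧ ∀ B : Alg L, B.Sat e → B.Sat ⟨_, (s, t)⟩ := by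
  obtain ⟨n, s, t⟩ := e
  obtain ⟨v, hv⟩ := not_forall.mp he
  -- rename each variable `i` to the element `v i`, numbered through `A ≃ Fin |A|`
  let g := Finite.equivFin A.carrier
  refine ⟨s.relabel (g ∘ v), t.relabel (g ∘ v), fun h => hv ?_,
    fun B hB w => by simpa only [Term.realize_relabel] using hB (w ∘ g ∘ v)⟩
  simpa only [Term.realize_relabel, Function.comp_def, Equiv.symm_apply_apply] using h g.symm

def failingPairs (A : Alg L) (n : ℕ) (V : Set (Alg L)) :
    Set (((Fin n → A.carrier) → A.carrier) × ((Fin n → A.carrier) → A.carrier)) :=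
  {p | p.1 ≠ p.2 ∧ ∃ s t : L.Term (Fin n), (∀ B ∈ V, B.Sat ⟨n, (s, t)⟩) ∧
    p = (fun v => s.realize v, fun v => t.realize v)}

theorem failingPairs_anti (A : Alg L) (n : ℕ) : Antitone (failingPairs A n) :=
  fun _ _ hVW _ ⟨hp, s, t, hst, hpst⟩ => ⟨hp, s, t, fun B hB => hst B (hVW hB), hpst⟩

theorem failingPairs_nonempty {A : Alg L} [Finite A.carrier] {V : Set (Alg L)}
    (hV : IsVariety L V) (hA : A ∉ V) : (failingPairs A (Nat.card A.carrier) V).Nonempty := by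
  obtain ⟨E, rfl⟩ := hV
  obtain ⟨e, heE, he⟩ : ∃ e ∈ E, ¬ A.Sat e := by simpa [ModClass] using hA
  obtain ⟨s, t, hst, hsat⟩ := exists_identity_fin_card_of_not_sat A he
  exact ⟨_, fun h => hst fun v => congrFun h v, s, t, fun B hB => hsat B (hB e heE), rfl⟩

theorem not_mem_varGen_of_failingPairs_nonempty {A : Alg L} {n : ℕ} {K : Set (Alg L)}
    (hK : (failingPairs A n K).Nonempty) : A ∉ varGen L K := by
  obtain ⟨p, hp, s, t, hst, rfl⟩ := hK
  exact fun hA => hp (funext (hA ⟨n, (s, t)⟩ hst))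

theorem mem_failingPairs_sUnion {A : Alg L} {n : ℕ} {c : Set (Set (Alg L))} (hne : c.Nonempty)
    (hcA : ∀ V ∈ c, V ⊆ varGen L {A}) {p} (hp : ∀ V ∈ c, p ∈ failingPairs A n V) :
    p ∈ failingPairs A n (⋃₀ c) := by
  obtain ⟨V₀, hV₀⟩ := hne
  obtain ⟨hp₀, s, t, -, rfl⟩ := hp V₀ hV₀
  refine ⟨hp₀, s, t, ?_, rfl⟩
  rintro B ⟨V, hV, hBV⟩ w
  obtain ⟨-, s', t', hst', hpst'⟩ := hp V hV
  obtain ⟨hs, ht⟩ := Prod.mk.inj hpst'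
  -- in `Var(A)`, terms inducing the same operation on `A` are interchangeable
  have hBA := hcA V hV hBV
  calc s.realize w = s'.realize w :=
        sat_of_mem_varGen_singleton (e := ⟨n, (s, s')⟩) hBA (congrFun hs) w
    _ = t'.realize w := hst' B hBV w
    _ = t.realize w := sat_of_mem_varGen_singleton (e := ⟨n, (t', t)⟩) hBA (congrFun ht.symm) w

theorem varGen_sUnion_ssubset {A : Alg L} [Finite A.carrier] {c : Set (Set (Alg L))}
    (hc : IsChain (· ⊆ ·) c) (hne : c.Nonempty)
    (hcA : ∀ V ∈ c, IsVariety L V ∧ V ⊂ varGen L {A}) :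
    varGen L (⋃₀ c) ⊂ varGen L {A} := by
  have hsub : ∀ V ∈ c, V ⊆ varGen L {A} := fun V hV => (hcA V hV).2.subset
  rw [ssubset_varGen_singleton_iff (isVariety_varGen _)]
  refine ⟨varGen_subset_of_isVariety (isVariety_varGen _) (Set.sUnion_subset hsub), ?_⟩
  obtain ⟨V₀, hV₀, hmin⟩ := hc.exists_forall_subset_of_antitone hne
    (failingPairs_anti A (Nat.card A.carrier)) fun _ _ => Set.toFinite _
  obtain ⟨hV₀var, hV₀A⟩ := hcA V₀ hV₀
  obtain ⟨p, hp⟩ := failingPairs_nonempty hV₀var ((ssubset_varGen_singleton_iff hV₀var).mp hV₀A).2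
  exact not_mem_varGen_of_failingPairs_nonempty
    ⟨p, mem_failingPairs_sUnion hne hsub fun V hV => hmin V hV hp⟩

end Varieties

theorem proper_subvariety_le_subcover_general
    (L : FirstOrder.Language) (A : Alg L) [Finite A.carrier]
    (U : Set (Alg L)) (hU : IsVariety L U) (hUA : U ⊂ varGen L {A}) :
    ∃ W : Set (Alg L), IsVariety L W ∧ U ⊆ W ∧ IsSubcover L W (varGen L {A}) := by
  let S : Set (Set (Alg L)) := {V | IsVariety L V ∧ V ⊂ varGen L {A} ∧ U ⊆ V}
  have hchain : ∀ c ⊆ S, IsChain (· ⊆ ·) c → c.Nonempty → ∃ W ∈ S, ∀ V ∈ c, V ⊆ W := by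
    intro c hcS hc hne
    have hle : ∀ V ∈ c, V ⊆ varGen L (⋃₀ c) :=
      fun V hV => (Set.subset_sUnion_of_mem hV).trans (subset_varGen _)
    obtain ⟨V, hV⟩ := hne
    refine ⟨varGen L (⋃₀ c), ⟨isVariety_varGen _, ?_, (hcS hV).2.2.trans (hle V hV)⟩, hle⟩
    exact varGen_sUnion_ssubset hc ⟨V, hV⟩ fun V hV => ⟨(hcS hV).1, (hcS hV).2.1⟩
  obtain ⟨W, hUW, hW⟩ := zorn_subset_nonempty S hchain U ⟨hU, hUA, subset_rfl⟩
  refine ⟨W, hW.prop.1, hUW, hW.prop.2.1, ?_⟩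
  rintro ⟨V, hV, hWV, hVA⟩
  exact hWV.ne (hW.eq_of_subset ⟨hV, hVA, hUW.trans hWV.subset⟩ hWV.subset)

/-- **Lemma (finitely many subcovers, part 2).** Let `A` be a finite algebra. Then
every proper subvariety `U` of `Var(A)` is contained in a subcover of `Var(A)`:
there is a variety `W` with `U ⊆ W ≺ Var(A)`. -/
theorem proper_subvariety_le_subcover
    (L : FirstOrder.Language) [L.IsAlgebraic] (A : Alg L) [Finite A.carrier]
    (U : Set (Alg L)) (hU : IsVariety L U) (hUA : U ⊂ varGen L {A}) :
    ∃ W : Set (Alg L), IsVariety L W ∧ U ⊆ W ∧ IsSubcover L W (varGen L {A}) :=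
  proper_subvariety_le_subcover_general L A U hU hUA
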